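/- arXiv:2104.04729 — 2 statements merged into one kernel-verified Lean document; each statement's English description precedes it below -/
import Mathlib

section
/- (Proposition 2) If t ∈ [0,T) and 0 < y < P·e^{−μ(T−t)}, then V(t,y) > G(t,y); that is, if the price of the carbon emission right at time t is below P·e^{−μ(T−t)}, it is not optimal to stop (the enterprise maintains production). -/
open MeasureTheory ProbabilityTheory

/-- A standard Brownian motion with respect to the filtration `ℱ` under the probability
measure `Pr`: it starts at `0` a.s., has a.s. continuous paths, is adapted, and for
`0 ≤ u ≤ s` the increment `B s - B u` is independent of `ℱ u` and Gaussian with mean `0`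
and variance `s - u`. -/
structure IsStandardBM {Ω : Type*} {mΩ : MeasurableSpace Ω}
    (Pr : Measure Ω) (ℱ : Filtration ℝ mΩ) (B : ℝ → Ω → ℝ) : Prop where
  zero : ∀ᵐ ω ∂Pr, B 0 ω = 0
  cont : ∀ᵐ ω ∂Pr, Continuous fun s => B s ω
  adapted : Adapted ℱ B
  indep : ∀ u s : ℝ, 0 ≤ u → u ≤ s →
    Indep (MeasurableSpace.comap (fun ω => B s ω - B u ω) Real.measurableSpace) (ℱ u) Pr
  gauss : ∀ u s : ℝ, 0 ≤ u → u ≤ s →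
    Pr.map (fun ω => B s ω - B u ω) = gaussianReal 0 (Real.toNNReal (s - u))

/-- `G t y`: the expected reward from stopping immediately at time `t` when the price is `y`. -/
noncomputable def G (M P μ T t y : ℝ) : ℝ :=
  M * P * t + M * y * Real.exp (μ * (T - t)) * (T - t)

/-- `V t y`: the value function, the supremum of expected rewards `E[R^{t,y}(τ)]` over all
stopping times `τ` of the filtration `ℱ` with `t ≤ τ ≤ T` almost surely, where
`R^{t,y}(τ) = M·P·τ + M·Y_T^{t,y}·(T − τ)` and
`Y_T^{t,y} = y·exp((μ − σ²/2)(T − t) + σ(B_T − B_t))`. -/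
noncomputable def V {Ω : Type*} {mΩ : MeasurableSpace Ω}
    (Pr : Measure Ω) (ℱ : Filtration ℝ mΩ) (B : ℝ → Ω → ℝ)
    (M P σ μ T t y : ℝ) : ℝ :=
  sSup {x : ℝ | ∃ τ : Ω → ℝ, IsStoppingTime ℱ (fun ω => (τ ω : WithTop ℝ)) ∧
    (∀ᵐ ω ∂Pr, t ≤ τ ω ∧ τ ω ≤ T) ∧
    x = ∫ ω, (M * P * τ ω +
      M * (y * Real.exp ((μ - σ ^ 2 / 2) * (T - t) + σ * (B T ω - B t ω))) * (T - τ ω)) ∂Pr}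

/-!
Stopping at maturity `T` earns `M·P·T` for sure, while stopping at once earns
`G(t,y) = M·P·T − M·(T−t)·(P − y·e^{μ(T−t)})`, which is strictly smaller when
`y·e^{μ(T−t)} < P`. The only analytic point is that the supremum defining `V` is taken over
a set that is bounded above: the rewards are dominated by `|M·P|·T + T·E|M·Y_T|`, finite
because the terminal price is the exponential of a Gaussian increment.
-/

namespace IsStandardBM

variable {Ω : Type*} {mΩ : MeasurableSpace Ω} {Pr : Measure Ω} {ℱ : Filtration ℝ mΩ}
  {B : ℝ → Ω → ℝ}

lemma measurable_sub (hB : IsStandardBM Pr ℱ B) (s u : ℝ) :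
    Measurable fun ω => B s ω - B u ω :=
  ((hB.adapted s).mono (ℱ.le s) le_rfl).sub ((hB.adapted u).mono (ℱ.le u) le_rfl)

lemma integrable_exp_mul_sub (hB : IsStandardBM Pr ℱ B) {u s : ℝ} (hu : 0 ≤ u) (hus : u ≤ s)
    (c : ℝ) : Integrable (fun ω => Real.exp (c * (B s ω - B u ω))) Pr := by
  have h := integrable_exp_mul_gaussianReal (μ := 0) (v := (s - u).toNNReal) c
  rw [← hB.gauss u s hu hus] at h
  exact (integrable_map_measure (by fun_prop) (hB.measurable_sub s u).aemeasurable).mp h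

lemma integrable_mul_exp_add_mul_sub (hB : IsStandardBM Pr ℱ B) {u s : ℝ} (hu : 0 ≤ u)
    (hus : u ≤ s) (y a c : ℝ) :
    Integrable (fun ω => y * Real.exp (a + c * (B s ω - B u ω))) Pr := by
  simpa only [Real.exp_add, mul_assoc] using
    (hB.integrable_exp_mul_sub hu hus c).const_mul (y * Real.exp a)

end IsStandardBM

lemma integral_mul_add_mul_sub_le {Ω : Type*} {mΩ : MeasurableSpace Ω} {Pr : Measure Ω}
    [IsProbabilityMeasure Pr] {τ Y : Ω → ℝ} {T : ℝ} (hT : 0 ≤ T) (hY : Integrable Y Pr)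
    (hτ : ∀ᵐ ω ∂Pr, 0 ≤ τ ω ∧ τ ω ≤ T) (c : ℝ) :
    ∫ ω, (c * τ ω + Y ω * (T - τ ω)) ∂Pr ≤ |c| * T + T * ∫ ω, |Y ω| ∂Pr := by
  by_cases hint : Integrable (fun ω => c * τ ω + Y ω * (T - τ ω)) Pr
  · have hbound : Integrable (fun ω => |c| * T + T * |Y ω|) Pr :=
      (integrable_const _).add (hY.abs.const_mul T)
    calc ∫ ω, (c * τ ω + Y ω * (T - τ ω)) ∂Pr ≤ ∫ ω, (|c| * T + T * |Y ω|) ∂Pr := by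
          refine integral_mono_ae hint hbound ?_
          filter_upwards [hτ] with ω ⟨hτ0, hτT⟩
          have hc : c * τ ω ≤ |c| * T :=
            (le_abs_self _).trans (by rw [abs_mul, abs_of_nonneg hτ0]; gcongr)
          have hY : Y ω * (T - τ ω) ≤ T * |Y ω| :=
            (le_abs_self _).trans <| by
              rw [abs_mul, abs_of_nonneg (sub_nonneg.2 hτT), mul_comm]; gcongr; linarith
          linarith
      _ = |c| * T + T * ∫ ω, |Y ω| ∂Pr := by
          rw [integral_add (integrable_const _) (hY.abs.const_mul T), integral_const,
            integral_const_mul]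
          simp
  · rw [integral_undef hint]
    have : 0 ≤ ∫ ω, |Y ω| ∂Pr := integral_nonneg fun ω => abs_nonneg (Y ω)
    positivity

lemma le_V_of_isStoppingTime {Ω : Type*} {mΩ : MeasurableSpace Ω} {Pr : Measure Ω}
    [IsProbabilityMeasure Pr] {ℱ : Filtration ℝ mΩ} {B : ℝ → Ω → ℝ}
    (hB : IsStandardBM Pr ℱ B) {M P σ μ T t : ℝ} (y : ℝ) (ht0 : 0 ≤ t) (htT : t ≤ T)
    {τ : Ω → ℝ} (hτ : IsStoppingTime ℱ fun ω => (τ ω : WithTop ℝ))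
    (hτt : ∀ᵐ ω ∂Pr, t ≤ τ ω ∧ τ ω ≤ T) :
    ∫ ω, (M * P * τ ω +
      M * (y * Real.exp ((μ - σ ^ 2 / 2) * (T - t) + σ * (B T ω - B t ω))) * (T - τ ω)) ∂Pr
      ≤ V Pr ℱ B M P σ μ T t y := by
  have hY :=
    (hB.integrable_mul_exp_add_mul_sub ht0 htT y ((μ - σ ^ 2 / 2) * (T - t)) σ).const_mul M
  refine le_csSup ?_ ⟨τ, hτ, hτt, rfl⟩
  exact ⟨_, fun _ ⟨_, _, hτ't, hx⟩ => hx ▸ integral_mul_add_mul_sub_le (ht0.trans htT) hY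
    (hτ't.mono fun _ h => ⟨ht0.trans h.1, h.2⟩) (M * P)⟩

lemma G_lt_mul_mul {M P μ T t y : ℝ} (hM : 0 < M) (htT : t < T)
    (hy : y < P * Real.exp (-μ * (T - t))) : G M P μ T t y < M * P * T := by
  have hyP : y * Real.exp (μ * (T - t)) < P := by
    calc y * Real.exp (μ * (T - t)) < P * Real.exp (-μ * (T - t)) * Real.exp (μ * (T - t)) :=
          mul_lt_mul_of_pos_right hy (Real.exp_pos _)
      _ = P := by rw [mul_assoc, ← Real.exp_add]; ring_nf; simp
  have : 0 < M * (T - t) * (P - y * Real.exp (μ * (T - t))) := by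
    have := sub_pos.2 htT
    have := sub_pos.2 hyP
    positivity
  unfold G
  linarith

theorem stmt_3_general {Ω : Type*} {mΩ : MeasurableSpace Ω}
    (Pr : Measure Ω) [IsProbabilityMeasure Pr] (ℱ : Filtration ℝ mΩ) (B : ℝ → Ω → ℝ)
    (hB : IsStandardBM Pr ℱ B)
    (T M P σ μ : ℝ) (hM : 0 < M)
    (t y : ℝ) (ht : t ∈ Set.Ico 0 T)
    (hy : y < P * Real.exp (-μ * (T - t))) :
    G M P μ T t y < V Pr ℱ B M P σ μ T t y := by
  obtain ⟨ht0, htT⟩ := ht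
  calc G M P μ T t y < M * P * T := G_lt_mul_mul hM htT hy
    _ = ∫ ω, (M * P * T +
          M * (y * Real.exp ((μ - σ ^ 2 / 2) * (T - t) + σ * (B T ω - B t ω))) * (T - T)) ∂Pr := by
        simp
    _ ≤ V Pr ℱ B M P σ μ T t y :=
        le_V_of_isStoppingTime hB y ht0 htT.le (isStoppingTime_const ℱ T)
          (.of_forall fun _ => ⟨htT.le, le_rfl⟩)

theorem stmt_3 {Ω : Type*} {mΩ : MeasurableSpace Ω}
    (Pr : Measure Ω) [IsProbabilityMeasure Pr] (ℱ : Filtration ℝ mΩ) (B : ℝ → Ω → ℝ)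
    (hB : IsStandardBM Pr ℱ B)
    (T M P σ μ : ℝ) (hT : 0 < T) (hM : 0 < M) (hP : 0 < P) (hσ : 0 < σ)
    (t y : ℝ) (ht : t ∈ Set.Ico 0 T) (hy0 : 0 < y)
    (hy : y < P * Real.exp (-μ * (T - t))) :
    G M P μ T t y < V Pr ℱ B M P σ μ T t y :=
  stmt_3_general Pr ℱ B hB T M P σ μ hM t y ht hy
end

section
/- Define the free boundary b(t) := inf {y ∈ (0,∞) : V(t,y) = G(t,y)} (an infimum in the extended reals, equal to +∞ if the set is empty). Then for every t ∈ [0,T), b(t) ≥ P·e^{−μ(T−t)}; i.e., the lower bound curve y = P·e^{−μ(T−t)} lies below the free boundary. -/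
open MeasureTheory ProbabilityTheory

/-- The free boundary `b(t)`: the infimum (in the extended reals, so `+∞` if the set is
empty) of the prices `y > 0` at which stopping is optimal, i.e. `V(t,y) = G(t,y)`. -/
noncomputable def freeBoundary {Ω : Type*} {mΩ : MeasurableSpace Ω}
    (Pr : Measure Ω) (ℱ : Filtration ℝ mΩ) (B : ℝ → Ω → ℝ)
    (M P σ μ T t : ℝ) : EReal :=
  sInf {z : EReal | ∃ y : ℝ, 0 < y ∧ V Pr ℱ B M P σ μ T t y = G M P μ T t y ∧ z = (y : EReal)}

/-! Stopping at maturity, `τ = T`, earns `M·P·T`, so `V(t,y) ≥ M·P·T`. (The supremum defining `V`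
is not the junk value of an unbounded set: every expected reward is bounded by the integral of
an integrable function of `Y_T`, which is the exponential of a Gaussian increment.) On the other hand, if `y·e^{μ(T-t)} < P` then
`G(t,y) = M·P·t + M·y·e^{μ(T-t)}·(T - t) < M·P·T`. Hence `V(t,y) ≠ G(t,y)` for every
`y < P·e^{-μ(T-t)}`, and the free boundary lies above that curve. -/

lemma IsStandardBM.integrable_exp_mul_increment {Ω : Type*} {mΩ : MeasurableSpace Ω}
    {Pr : Measure Ω} [IsProbabilityMeasure Pr] {ℱ : Filtration ℝ mΩ} {B : ℝ → Ω → ℝ}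
    (hB : IsStandardBM Pr ℱ B) (c : ℝ) {u s : ℝ} (hu : 0 ≤ u) (hus : u ≤ s) :
    Integrable (fun ω => Real.exp (c * (B s ω - B u ω))) Pr :=
  mgf_pos_iff.1 <| by rw [mgf_gaussianReal (hB.gauss u s hu hus)]; exact Real.exp_pos _

lemma integral_reward_le {Ω : Type*} [MeasurableSpace Ω] {Pr : Measure Ω} [IsFiniteMeasure Pr]
    {Y τ : Ω → ℝ} (hY : Integrable Y Pr) (a b : ℝ) {t T : ℝ}
    (hτ : ∀ᵐ ω ∂Pr, t ≤ τ ω ∧ τ ω ≤ T) :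
    ∫ ω, (a * τ ω + b * Y ω * (T - τ ω)) ∂Pr
      ≤ ∫ ω, (|a| * (|t| + |T|) + |b * Y ω| * (T - t)) ∂Pr := by
  have hg_int : Integrable (fun ω => |a| * (|t| + |T|) + |b * Y ω| * (T - t)) Pr :=
    (integrable_const _).add ((hY.const_mul b).abs.mul_const _)
  have hg_nonneg : ∀ᵐ ω ∂Pr, 0 ≤ |a| * (|t| + |T|) + |b * Y ω| * (T - t) := by
    filter_upwards [hτ] with ω ⟨htτ, hτT⟩
    have : 0 ≤ |b * Y ω| * (T - t) := mul_nonneg (abs_nonneg _) (by linarith)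
    positivity
  by_cases hf : Integrable (fun ω => a * τ ω + b * Y ω * (T - τ ω)) Pr
  · refine integral_mono_ae hf hg_int ?_
    filter_upwards [hτ] with ω ⟨htτ, hτT⟩
    have hτ_abs : |τ ω| ≤ |t| + |T| :=
      abs_le.2 ⟨by linarith [neg_abs_le t, abs_nonneg T], by linarith [le_abs_self T, abs_nonneg t]⟩
    have h_first : a * τ ω ≤ |a| * (|t| + |T|) :=
      calc a * τ ω ≤ |a * τ ω| := le_abs_self _
        _ = |a| * |τ ω| := abs_mul _ _
        _ ≤ |a| * (|t| + |T|) := mul_le_mul_of_nonneg_left hτ_abs (abs_nonneg a)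
    have h_second : b * Y ω * (T - τ ω) ≤ |b * Y ω| * (T - t) :=
      calc b * Y ω * (T - τ ω) ≤ |b * Y ω| * (T - τ ω) :=
            mul_le_mul_of_nonneg_right (le_abs_self _) (by linarith)
        _ ≤ |b * Y ω| * (T - t) := mul_le_mul_of_nonneg_left (by linarith) (abs_nonneg _)
    exact add_le_add h_first h_second
  · -- a non-integrable reward has the junk integral `0`, still below the nonnegative bound
    rw [integral_undef hf]
    exact integral_nonneg_of_ae hg_nonneg

lemma reward_at_maturity_le_V {Ω : Type*} {mΩ : MeasurableSpace Ω}
    {Pr : Measure Ω} [IsProbabilityMeasure Pr] {ℱ : Filtration ℝ mΩ} {B : ℝ → Ω → ℝ}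
    (hB : IsStandardBM Pr ℱ B) (M P σ μ : ℝ) {T t : ℝ} (ht : 0 ≤ t) (htT : t ≤ T) (y : ℝ) :
    M * P * T ≤ V Pr ℱ B M P σ μ T t y := by
  set Y : Ω → ℝ := fun ω => y * Real.exp ((μ - σ ^ 2 / 2) * (T - t) + σ * (B T ω - B t ω))
  have hY : Integrable Y Pr := by
    simp only [Y, Real.exp_add, ← mul_assoc]
    exact (hB.integrable_exp_mul_increment σ ht htT).const_mul _
  have h_bdd : BddAbove {x : ℝ | ∃ τ : Ω → ℝ, IsStoppingTime ℱ (fun ω => (τ ω : WithTop ℝ)) ∧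
      (∀ᵐ ω ∂Pr, t ≤ τ ω ∧ τ ω ≤ T) ∧ x = ∫ ω, (M * P * τ ω + M * Y ω * (T - τ ω)) ∂Pr} := by
    refine ⟨∫ ω, (|M * P| * (|t| + |T|) + |M * Y ω| * (T - t)) ∂Pr, ?_⟩
    rintro x ⟨τ, -, hτ, rfl⟩
    exact integral_reward_le hY (M * P) M hτ
  exact le_csSup h_bdd ⟨fun _ => T, isStoppingTime_const ℱ T, .of_forall fun _ => ⟨htT, le_rfl⟩,
    by simp⟩

lemma G_lt_reward_at_maturity {M P μ T t y : ℝ} (hM : 0 < M) (htT : t < T)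
    (hy : y * Real.exp (μ * (T - t)) < P) :
    G M P μ T t y < M * P * T := by
  have h := mul_lt_mul_of_pos_left hy (mul_pos hM (sub_pos.2 htT))
  unfold G
  linarith

theorem stmt_4_general {Ω : Type*} {mΩ : MeasurableSpace Ω}
    (Pr : Measure Ω) [IsProbabilityMeasure Pr] (ℱ : Filtration ℝ mΩ) (B : ℝ → Ω → ℝ)
    (hB : IsStandardBM Pr ℱ B)
    (T M P σ μ : ℝ) (hM : 0 < M)
    (t : ℝ) (ht : t ∈ Set.Ico 0 T) :
    ((P * Real.exp (-μ * (T - t)) : ℝ) : EReal)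
      ≤ freeBoundary Pr ℱ B M P σ μ T t := by
  refine le_sInf ?_
  rintro _ ⟨y, -, hVG, rfl⟩
  rw [EReal.coe_le_coe_iff]
  by_contra! hy
  rw [neg_mul, Real.exp_neg, ← div_eq_mul_inv, lt_div_iff₀ (Real.exp_pos _)] at hy
  have hV := reward_at_maturity_le_V hB M P σ μ ht.1 ht.2.le y
  linarith [G_lt_reward_at_maturity hM ht.2 hy]

theorem stmt_4 {Ω : Type*} {mΩ : MeasurableSpace Ω}
    (Pr : Measure Ω) [IsProbabilityMeasure Pr] (ℱ : Filtration ℝ mΩ) (B : ℝ → Ω → ℝ)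
    (hB : IsStandardBM Pr ℱ B)
    (T M P σ μ : ℝ) (hT : 0 < T) (hM : 0 < M) (hP : 0 < P) (hσ : 0 < σ)
    (t : ℝ) (ht : t ∈ Set.Ico 0 T) :
    ((P * Real.exp (-μ * (T - t)) : ℝ) : EReal)
      ≤ freeBoundary Pr ℱ B M P σ μ T t :=
  stmt_4_general Pr ℱ B hB T M P σ μ hM t ht
end
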